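/- arXiv:2307.16658 — 2 statements merged into one kernel-verified Lean document; each statement's English description precedes it below -/
import Mathlib

section
/- Let ω ∈ (0,1) be a quadratic irrational and let C be the Ceiling map C(x) = ⌈1/x⌉ − 1/x. Then ω is purely periodic under C (i.e. C^[p](ω) = ω for some integer p ≥ 1) if and only if its Galois conjugate ω' satisfies ω' > 1. -/
/-!
Write `n = ⌈1/x⌉ ≥ 2`, so that `C x = n - 1/x`; the conjugate transforms in the same way,
`(C x)' = n - 1/x'`.

If `x' > 1`, all conjugates along the orbit stay above `1`. The orbit points are then roots of
integer quadratics `a X² + b X + c` with `a > 0` and a common discriminant `D`; since the roots are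
separated by `1`, the coefficients are bounded in terms of `D`, so the orbit is finite. On such
points `C` is injective, as the conjugate determines `n`, so `x` is purely periodic.

Conversely, along a periodic orbit, once a conjugate is negative or exceeds `1`, all later ones
exceed `1`, and by periodicity so do all. If `x' < 1` all conjugates therefore lie in `(0,1)`, where
`|C x - (C x)'| = |x - x'| / (x x') > |x - x'|`, and the orbit cannot close up.
-/

noncomputable def ceilingMap (x : ℝ) : ℝ :=
  open Classical in
  if Irrational x ∧ x ∈ Set.Ioo (0 : ℝ) 1 then ⌈1 / x⌉ - 1 / x else 0

open Set Function

def IsQuadraticIrrational (x : ℝ) : Prop :=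
  Irrational x ∧ ∃ a b c : ℤ, a ≠ 0 ∧ (a : ℝ) * x ^ 2 + b * x + c = 0

/-- Meaningful for quadratic irrationals only: there `galoisConj_eq` shows that the value does not
depend on the chosen quadratic. -/
noncomputable def galoisConj (x : ℝ) : ℝ :=
  open Classical in
  if h : ∃ t : ℤ × ℤ × ℤ, t.1 ≠ 0 ∧ (t.1 : ℝ) * x ^ 2 + t.2.1 * x + t.2.2 = 0 then
    -(h.choose.2.1 : ℝ) / h.choose.1 - x
  else 0

theorem Irrational.eq_zero_of_intCast_mul_add_eq_zero {x : ℝ} (hx : Irrational x) {q r : ℤ}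
    (h : (q : ℝ) * x + r = 0) : q = 0 := by
  by_contra hq
  exact ((hx.intCast_mul hq).add_intCast r).ne_zero h

theorem Irrational.div_eq_div_of_quadratic {x : ℝ} (hx : Irrational x) {a b c a' b' c' : ℤ}
    (ha : a ≠ 0) (ha' : a' ≠ 0) (h : (a : ℝ) * x ^ 2 + b * x + c = 0)
    (h' : (a' : ℝ) * x ^ 2 + b' * x + c' = 0) : (b : ℝ) / a = b' / a' := by
  have hlin : ((a' * b - a * b' : ℤ) : ℝ) * x + (a' * c - a * c' : ℤ) = 0 := by
    push_cast
    linear_combination (a' : ℝ) * h - (a : ℝ) * h'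
  have hb : (a' : ℝ) * b = a * b' := by
    exact_mod_cast sub_eq_zero.mp (hx.eq_zero_of_intCast_mul_add_eq_zero hlin)
  rw [div_eq_div_iff (by exact_mod_cast ha) (by exact_mod_cast ha')]
  linarith

theorem galoisConj_eq {x : ℝ} (hx : Irrational x) {a b c : ℤ} (ha : a ≠ 0)
    (h : (a : ℝ) * x ^ 2 + b * x + c = 0) : galoisConj x = -(b : ℝ) / a - x := by
  have hex : ∃ t : ℤ × ℤ × ℤ, t.1 ≠ 0 ∧ (t.1 : ℝ) * x ^ 2 + t.2.1 * x + t.2.2 = 0 :=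
    ⟨(a, b, c), ha, h⟩
  rw [galoisConj, dif_pos hex, neg_div, neg_div,
    hx.div_eq_div_of_quadratic hex.choose_spec.1 ha hex.choose_spec.2 h]

theorem eq_galoisConj_of_quadratic {x y : ℝ} (hx : Irrational x) {a b c : ℤ} (ha : a ≠ 0)
    (h : (a : ℝ) * x ^ 2 + b * x + c = 0) (hy : (a : ℝ) * y ^ 2 + b * y + c = 0)
    (hne : y ≠ x) : y = galoisConj x := by
  have ha' : (a : ℝ) ≠ 0 := by exact_mod_cast ha
  have hsum : (a : ℝ) * (x + y) + b = 0 := by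
    refine (mul_eq_zero.mp ?_).resolve_left (sub_ne_zero.mpr hne)
    linear_combination hy - h
  rw [galoisConj_eq hx ha h]
  field_simp
  linarith

theorem mul_add_galoisConj {x : ℝ} (hx : Irrational x) {a b c : ℤ} (ha : a ≠ 0)
    (h : (a : ℝ) * x ^ 2 + b * x + c = 0) : (a : ℝ) * (x + galoisConj x) = -b := by
  have ha' : (a : ℝ) ≠ 0 := by exact_mod_cast ha
  rw [galoisConj_eq hx ha h]
  field_simp
  ring

theorem mul_mul_galoisConj {x : ℝ} (hx : Irrational x) {a b c : ℤ} (ha : a ≠ 0)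
    (h : (a : ℝ) * x ^ 2 + b * x + c = 0) : (a : ℝ) * (x * galoisConj x) = c := by
  have ha' : (a : ℝ) ≠ 0 := by exact_mod_cast ha
  rw [galoisConj_eq hx ha h]
  field_simp
  linear_combination -h

theorem Irrational.const_ne_zero_of_quadratic {x : ℝ} (hx : Irrational x) {a b c : ℤ}
    (ha : a ≠ 0) (h : (a : ℝ) * x ^ 2 + b * x + c = 0) : c ≠ 0 := by
  rintro rfl
  have hlin : x * ((a : ℝ) * x + b) = 0 := by push_cast at h; linear_combination h
  exact ha (hx.eq_zero_of_intCast_mul_add_eq_zero ((mul_eq_zero.mp hlin).resolve_left hx.ne_zero))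

theorem galoisConj_quadratic {x : ℝ} (hx : Irrational x) {a b c : ℤ} (ha : a ≠ 0)
    (h : (a : ℝ) * x ^ 2 + b * x + c = 0) :
    (a : ℝ) * galoisConj x ^ 2 + b * galoisConj x + c = 0 := by
  have ha' : (a : ℝ) ≠ 0 := by exact_mod_cast ha
  rw [galoisConj_eq hx ha h]
  field_simp
  linear_combination (a : ℝ) * h

theorem quadratic_sub_inv {x : ℝ} (hx : x ≠ 0) {a b c : ℝ} (n : ℝ)
    (h : a * x ^ 2 + b * x + c = 0) :
    c * (n - 1 / x) ^ 2 + (-b - 2 * c * n) * (n - 1 / x) + (a + b * n + c * n ^ 2) = 0 := by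
  field_simp
  linear_combination h

namespace IsQuadraticIrrational

variable {x : ℝ}

theorem exists_quadratic_pos (hx : IsQuadraticIrrational x) :
    ∃ a b c : ℤ, 0 < a ∧ (a : ℝ) * x ^ 2 + b * x + c = 0 := by
  obtain ⟨-, a, b, c, ha, h⟩ := hx
  rcases ha.lt_or_gt with hneg | hpos
  · exact ⟨-a, -b, -c, by omega, by push_cast; linear_combination -h⟩
  · exact ⟨a, b, c, hpos, h⟩

theorem irrational_galoisConj (hx : IsQuadraticIrrational x) : Irrational (galoisConj x) := by
  obtain ⟨hirr, a, b, c, ha, h⟩ := hx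
  rw [galoisConj_eq hirr ha h, ← Rat.cast_intCast (n := b), ← Rat.cast_intCast (n := a),
    ← Rat.cast_neg, ← Rat.cast_div]
  exact hirr.ratCast_sub _

theorem galoisConj_ne_zero (hx : IsQuadraticIrrational x) : galoisConj x ≠ 0 :=
  hx.irrational_galoisConj.ne_zero

theorem galoisConj_ne (hx : IsQuadraticIrrational x) : galoisConj x ≠ x := by
  obtain ⟨hirr, a, b, c, ha, h⟩ := hx
  rw [galoisConj_eq hirr ha h]
  intro heq
  have hlin : ((2 * a : ℤ) : ℝ) * x + b = 0 := by
    field_simp at heq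
    push_cast
    linarith
  have := hirr.eq_zero_of_intCast_mul_add_eq_zero hlin
  omega

theorem intCast_sub_inv (hx : IsQuadraticIrrational x) (n : ℤ) :
    IsQuadraticIrrational (n - 1 / x) := by
  obtain ⟨hirr, a, b, c, ha, h⟩ := hx
  refine ⟨by simpa only [one_div] using hirr.inv.intCast_sub n, c, -b - 2 * c * n,
    a + b * n + c * n ^ 2, hirr.const_ne_zero_of_quadratic ha h, ?_⟩
  push_cast
  exact quadratic_sub_inv hirr.ne_zero n h

theorem galoisConj_intCast_sub_inv (hx : IsQuadraticIrrational x) (n : ℤ) :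
    galoisConj (n - 1 / x) = n - 1 / galoisConj x := by
  obtain ⟨a, b, c, ha, h⟩ := hx.2
  refine (eq_galoisConj_of_quadratic (a := c) (b := -b - 2 * c * n) (c := a + b * n + c * n ^ 2)
    (hx.intCast_sub_inv n).1 (hx.1.const_ne_zero_of_quadratic ha h) ?_ ?_ ?_).symm
  · push_cast
    exact quadratic_sub_inv hx.1.ne_zero n h
  · push_cast
    exact quadratic_sub_inv hx.galoisConj_ne_zero n (galoisConj_quadratic hx.1 ha h)
  · intro heq
    exact hx.galoisConj_ne (by simpa using heq)

end IsQuadraticIrrational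

theorem ceilingMap_eq {x : ℝ} (hx : Irrational x) (hm : x ∈ Ioo 0 1) :
    ceilingMap x = ⌈1 / x⌉ - 1 / x := by
  rw [ceilingMap, if_pos ⟨hx, hm⟩]

theorem two_le_ceil_one_div {x : ℝ} (hm : x ∈ Ioo 0 1) : 2 ≤ ⌈1 / x⌉ := by
  have : (1 : ℤ) < ⌈1 / x⌉ := Int.lt_ceil.mpr (by exact_mod_cast one_lt_one_div hm.1 hm.2)
  omega

theorem ceilingMap_mem_Ioo {x : ℝ} (hx : Irrational x) (hm : x ∈ Ioo 0 1) :
    ceilingMap x ∈ Ioo 0 1 := by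
  rw [ceilingMap_eq hx hm]
  have hne : 1 / x ≠ ⌈1 / x⌉ := by simpa only [one_div] using hx.inv.ne_int ⌈x⁻¹⌉
  exact ⟨sub_pos.mpr ((Int.le_ceil _).lt_of_ne hne), by linarith [Int.ceil_lt_add_one (1 / x)]⟩

theorem mapsTo_ceilingMap :
    MapsTo ceilingMap {x | IsQuadraticIrrational x ∧ x ∈ Ioo 0 1}
      {x | IsQuadraticIrrational x ∧ x ∈ Ioo 0 1} := fun _ ⟨hx, hm⟩ =>
  ⟨ceilingMap_eq hx.1 hm ▸ hx.intCast_sub_inv _, ceilingMap_mem_Ioo hx.1 hm⟩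

theorem galoisConj_ceilingMap {x : ℝ} (hx : IsQuadraticIrrational x) (hm : x ∈ Ioo 0 1) :
    galoisConj (ceilingMap x) = ⌈1 / x⌉ - 1 / galoisConj x := by
  rw [ceilingMap_eq hx.1 hm, hx.galoisConj_intCast_sub_inv]

theorem one_lt_intCast_sub_one_div {n : ℤ} (hn : 2 ≤ n) {y : ℝ} (hy : y < 0 ∨ 1 < y) :
    1 < n - 1 / y := by
  have hn' : (2 : ℝ) ≤ n := by exact_mod_cast hn
  rcases hy with hy | hy
  · linarith [one_div_neg.mpr hy]
  · linarith [(div_lt_one (zero_lt_one.trans hy)).mpr hy]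

theorem abs_sub_lt_abs_one_div_sub_one_div {x y : ℝ} (hx : x ∈ Ioo 0 1) (hy : y ∈ Ioo 0 1)
    (hne : x ≠ y) : |x - y| < |1 / y - 1 / x| := by
  have hxy : 0 < x * y := mul_pos hx.1 hy.1
  have hxy1 : x * y < 1 := by nlinarith [hx.1, hx.2, hy.1, hy.2]
  rw [div_sub_div _ _ hy.1.ne' hx.1.ne', one_mul, mul_one, mul_comm y, abs_div,
    abs_of_pos hxy, lt_div_iff₀ hxy, abs_sub_comm]
  exact mul_lt_of_lt_one_right (abs_pos.mpr (sub_ne_zero.mpr hne.symm)) hxy1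

theorem Irrational.lt_zero_or_one_lt_of_notMem_Ioo {y : ℝ} (hy : Irrational y)
    (h : y ∉ Ioo 0 1) : y < 0 ∨ 1 < y := by
  rcases hy.ne_zero.lt_or_gt with hneg | hpos
  · exact Or.inl hneg
  · exact Or.inr ((not_lt.mp fun h1 => h ⟨hpos, h1⟩).lt_of_ne hy.ne_one.symm)

theorem one_lt_galoisConj_of_mem_periodicPts {x : ℝ} (hx : IsQuadraticIrrational x)
    (hm : x ∈ Ioo 0 1) (hper : x ∈ periodicPts ceilingMap) : 1 < galoisConj x := by
  obtain ⟨p, hp, hpx⟩ := hper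
  set u : ℕ → ℝ := fun k => ceilingMap^[k] x
  have hu (k : ℕ) : IsQuadraticIrrational (u k) ∧ u k ∈ Ioo 0 1 :=
    mapsTo_ceilingMap.iterate k ⟨hx, hm⟩
  have hu_succ (k : ℕ) : u (k + 1) = ceilingMap (u k) := iterate_succ_apply' _ _ _
  have hconj_succ (k : ℕ) : galoisConj (u (k + 1)) = ⌈1 / u k⌉ - 1 / galoisConj (u k) := by
    rw [hu_succ, galoisConj_ceilingMap (hu k).1 (hu k).2]
  by_contra hle
  -- once a conjugate leaves `(0,1)` the later ones stay above `1`, contradicting periodicity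
  have hconj_mem (k : ℕ) : galoisConj (u k) ∈ Ioo 0 1 := by
    by_contra hk
    have hgt (j : ℕ) (hj : k < j) : 1 < galoisConj (u j) := by
      induction j, hj using Nat.le_induction with
      | base =>
        rw [hconj_succ]
        exact one_lt_intCast_sub_one_div (two_le_ceil_one_div (hu k).2)
          ((hu k).1.irrational_galoisConj.lt_zero_or_one_lt_of_notMem_Ioo hk)
      | succ j _ ih =>
        rw [hconj_succ]
        exact one_lt_intCast_sub_one_div (two_le_ceil_one_div (hu j).2) (Or.inr ih)
    have hret : u (p * (k + 1)) = x := (hpx.mul_const (k + 1)).eq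
    exact hle (hret ▸ hgt _ (by nlinarith))
  have hmono : StrictMono fun k => |u k - galoisConj (u k)| := by
    refine strictMono_nat_of_lt_succ fun k => ?_
    rw [hconj_succ, hu_succ, ceilingMap_eq (hu k).1.1 (hu k).2, sub_sub_sub_cancel_left]
    exact abs_sub_lt_abs_one_div_sub_one_div (hu k).2 (hconj_mem k) (hu k).1.galoisConj_ne.symm
  have := hmono hp
  simp only [u, iterate_zero_apply, hpx.eq] at this
  exact lt_irrefl _ this

theorem mem_periodicPts_of_injOn {α : Type*} {f : α → α} {s : Set α} (hinj : InjOn f s)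
    (hmaps : MapsTo f s s) {x : α} (hx : x ∈ s) (hfin : (range fun n => f^[n] x).Finite) :
    x ∈ periodicPts f := by
  obtain ⟨k, l, hkl, heq⟩ :=
    hfin.exists_lt_map_eq_of_forall_mem (mem_range_self (f := fun n => f^[n] x))
  refine ⟨l - k, by omega, (hinj.iterate hmaps k) (hmaps.iterate _ hx) hx ?_⟩
  rw [← iterate_add_apply, Nat.add_sub_cancel' hkl.le]
  exact heq.symm

theorem finite_setOf_quadratic_root (N : ℤ) :
    {x : ℝ | ∃ a ∈ Icc 1 N, ∃ b ∈ Icc (-N) N, ∃ c ∈ Icc (-N) N,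
      (a : ℝ) * x ^ 2 + b * x + c = 0}.Finite := by
  have hroots (a b c : ℤ) (ha : a ≠ 0) : {x : ℝ | (a : ℝ) * x ^ 2 + b * x + c = 0}.Finite := by
    open Polynomial in
    have hp : (C (a : ℝ) * X ^ 2 + C (b : ℝ) * X + C (c : ℝ)) ≠ 0 := by
      intro h
      have h2 := congrArg (coeff · 2) h
      simp only [coeff_add, coeff_C_mul_X_pow, coeff_C_mul_X, coeff_C, coeff_zero] at h2
      exact ha (by exact_mod_cast (by simpa using h2 : (a : ℝ) = 0))
    simpa using finite_setOfPred_isRoot hp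
  refine ((finite_Icc 1 N).biUnion fun a ha => (finite_Icc (-N) N).biUnion fun b _ =>
    (finite_Icc (-N) N).biUnion fun c _ => hroots a b c (by linarith [ha.1])).subset ?_
  rintro x ⟨a, ha, b, hb, c, hc, h⟩
  simp only [mem_iUnion]
  exact ⟨a, ha, b, hb, c, hc, h⟩

theorem coeffs_mem_Icc_of_roots {a b c D : ℤ} {x y : ℝ} (ha : 0 < a) (hx : x ∈ Ioo 0 1)
    (hy : 1 < y) (hsum : (a : ℝ) * (x + y) = -b) (hprod : (a : ℝ) * (x * y) = c)
    (hD : b ^ 2 - 4 * a * c = D) :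
    a ∈ Icc 1 (D + 4 * D ^ 2) ∧ b ∈ Icc (-(D + 4 * D ^ 2)) (D + 4 * D ^ 2) ∧
      c ∈ Icc (-(D + 4 * D ^ 2)) (D + 4 * D ^ 2) := by
  have ha' : (0 : ℝ) < a := by exact_mod_cast ha
  have hc : 0 < c := by
    have : (0 : ℝ) < c := hprod ▸ mul_pos ha' (mul_pos hx.1 (hx.1.trans (hx.2.trans hy)))
    exact_mod_cast this
  -- `a + b + c` is the value of the quadratic at `1`, which lies strictly between the roots
  have habc : a + b + c < 0 := by
    have : (a : ℝ) + b + c = a * ((1 - x) * (1 - y)) := by linear_combination hsum - hprod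
    have : (a : ℝ) + b + c < 0 :=
      this ▸ mul_neg_of_pos_of_neg ha' (mul_neg_of_pos_of_neg (by linarith [hx.2]) (by linarith))
    exact_mod_cast this
  have hb2 : (a + c + 1) ^ 2 ≤ b ^ 2 := by nlinarith
  have haD : a ≤ D := by nlinarith [sq_nonneg (a - c)]
  have hcD : c ≤ D := by nlinarith [sq_nonneg (a - c)]
  have hbD : b ^ 2 ≤ D + 4 * D ^ 2 := by nlinarith
  have hbb : |b| ≤ b ^ 2 := by
    rw [← sq_abs b, sq]
    exact le_mul_of_one_le_left (abs_nonneg b) (Int.one_le_abs (by rintro rfl; omega))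
  refine ⟨⟨ha, by nlinarith⟩, abs_le.mp (hbb.trans hbD), by constructor <;> nlinarith⟩

def IsCeilingReduced (x : ℝ) : Prop :=
  IsQuadraticIrrational x ∧ x ∈ Ioo 0 1 ∧ 1 < galoisConj x

theorem mapsTo_ceilingMap_isCeilingReduced :
    MapsTo ceilingMap {x | IsCeilingReduced x} {x | IsCeilingReduced x} := fun _ ⟨hx, hm, hy⟩ =>
  ⟨(mapsTo_ceilingMap ⟨hx, hm⟩).1, (mapsTo_ceilingMap ⟨hx, hm⟩).2, galoisConj_ceilingMap hx hm ▸
    one_lt_intCast_sub_one_div (two_le_ceil_one_div hm) (Or.inr hy)⟩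

theorem injOn_ceilingMap_isCeilingReduced : InjOn ceilingMap {x | IsCeilingReduced x} := by
  rintro x ⟨hx, hm, hy⟩ x' ⟨hx', hm', hy'⟩ heq
  have hconj := congrArg galoisConj heq
  rw [galoisConj_ceilingMap hx hm, galoisConj_ceilingMap hx' hm'] at hconj
  rw [ceilingMap_eq hx.1 hm, ceilingMap_eq hx'.1 hm'] at heq
  -- `1 / galoisConj` lies in `(0,1)` on both sides, so the integer parts must agree
  have hn : ⌈1 / x⌉ = ⌈1 / x'⌉ := by
    have hlt : |((⌈1 / x⌉ - ⌈1 / x'⌉ : ℤ) : ℝ)| < 1 := by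
      have h1 := (div_lt_one (zero_lt_one.trans hy)).mpr hy
      have h2 := (div_lt_one (zero_lt_one.trans hy')).mpr hy'
      have h3 : 0 < 1 / galoisConj x := one_div_pos.mpr (zero_lt_one.trans hy)
      have h4 : 0 < 1 / galoisConj x' := one_div_pos.mpr (zero_lt_one.trans hy')
      rw [abs_lt]
      push_cast
      constructor <;> linarith
    have : |⌈1 / x⌉ - ⌈1 / x'⌉| < 1 := by exact_mod_cast hlt
    rw [abs_lt] at this
    omega
  rw [hn, sub_right_inj, one_div, one_div, inv_inj] at heq
  exact heq

theorem IsCeilingReduced.exists_quadratic_ceilingMap {x : ℝ} (hx : IsCeilingReduced x)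
    {a b c : ℤ} (ha : 0 < a) (h : (a : ℝ) * x ^ 2 + b * x + c = 0) :
    ∃ a' b' c' : ℤ, 0 < a' ∧ b' ^ 2 - 4 * a' * c' = b ^ 2 - 4 * a * c ∧
      (a' : ℝ) * ceilingMap x ^ 2 + b' * ceilingMap x + c' = 0 := by
  obtain ⟨hq, hm, hy⟩ := hx
  have hc : (0 : ℝ) < c := mul_mul_galoisConj hq.1 ha.ne' h ▸
    mul_pos (by exact_mod_cast ha) (mul_pos hm.1 (zero_lt_one.trans hy))
  refine ⟨c, -b - 2 * c * ⌈1 / x⌉, a + b * ⌈1 / x⌉ + c * ⌈1 / x⌉ ^ 2, by exact_mod_cast hc,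
    by ring, ?_⟩
  rw [ceilingMap_eq hq.1 hm]
  push_cast
  exact quadratic_sub_inv hm.1.ne' _ h

theorem IsCeilingReduced.finite_range_iterate {x : ℝ} (hx : IsCeilingReduced x) :
    (range fun n => ceilingMap^[n] x).Finite := by
  obtain ⟨a, b, c, ha, h⟩ := hx.1.exists_quadratic_pos
  set D := b ^ 2 - 4 * a * c
  have hquad (n : ℕ) : ∃ a' b' c' : ℤ, 0 < a' ∧ b' ^ 2 - 4 * a' * c' = D ∧
      (a' : ℝ) * (ceilingMap^[n] x) ^ 2 + b' * ceilingMap^[n] x + c' = 0 := by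
    induction n with
    | zero => exact ⟨a, b, c, ha, rfl, h⟩
    | succ n ih =>
      obtain ⟨a', b', c', ha', hD, h'⟩ := ih
      obtain ⟨a'', b'', c'', ha'', hD', h''⟩ :=
        (mapsTo_ceilingMap_isCeilingReduced.iterate n hx).exists_quadratic_ceilingMap ha' h'
      rw [iterate_succ_apply']
      exact ⟨a'', b'', c'', ha'', hD'.trans hD, h''⟩
  refine (finite_setOf_quadratic_root (D + 4 * D ^ 2)).subset ?_
  rintro _ ⟨n, rfl⟩
  obtain ⟨a', b', c', ha', hD, h'⟩ := hquad n
  obtain ⟨hq, hm, hy⟩ := mapsTo_ceilingMap_isCeilingReduced.iterate n hx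
  obtain ⟨h1, h2, h3⟩ := coeffs_mem_Icc_of_roots ha' hm hy (mul_add_galoisConj hq.1 ha'.ne' h')
    (mul_mul_galoisConj hq.1 ha'.ne' h') hD
  exact ⟨a', h1, b', h2, c', h3, h'⟩

theorem IsCeilingReduced.mem_periodicPts {x : ℝ} (hx : IsCeilingReduced x) :
    x ∈ periodicPts ceilingMap :=
  mem_periodicPts_of_injOn injOn_ceilingMap_isCeilingReduced mapsTo_ceilingMap_isCeilingReduced hx
    hx.finite_range_iterate

/-- A quadratic irrational `ω ∈ (0,1)` is purely periodic under the Ceiling map iff its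
Galois conjugate `ω' = -b/a - ω` satisfies `ω' > 1`. -/
theorem ceiling_purely_periodic_iff
    (ω : ℝ) (hmem : ω ∈ Set.Ioo (0 : ℝ) 1) (hirr : Irrational ω)
    (a b c : ℤ) (ha : a ≠ 0)
    (hroot : (a : ℝ) * ω ^ 2 + (b : ℝ) * ω + (c : ℝ) = 0) :
    (∃ p : ℕ, 1 ≤ p ∧ ceilingMap^[p] ω = ω) ↔ 1 < -(b : ℝ) / (a : ℝ) - ω := by
  have hq : IsQuadraticIrrational ω := ⟨hirr, a, b, c, ha, hroot⟩
  rw [← galoisConj_eq hirr ha hroot]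
  exact ⟨fun hper => one_lt_galoisConj_of_mem_periodicPts hq hmem hper,
    fun hconj => IsCeilingReduced.mem_periodicPts ⟨hq, hmem, hconj⟩⟩
end

section
/- Let ω ∈ (−1/2,1/2) be a quadratic irrational and let V be the Nearest Integer map, V(x) = |1/x| − ⌊|1/x| + 1/2⌋ (that is, |1/x| minus the integer nearest to |1/x|). Then ω is purely periodic under V (i.e. V^[p](ω) = ω for some integer p ≥ 1) if and only if its Galois conjugate ω' satisfies: ω' ≤ −τ − 1 in case ω < 0, or ω' ≤ −τ in case ω > 0, where τ = (1+√5)/2 is the golden ratio. -/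
/-- The golden ratio `τ = (1 + √5)/2`. -/
noncomputable def goldenRatio' : ℝ := (1 + Real.sqrt 5) / 2

/-- The Nearest Integer map `x ↦ |1/x| - ⌊|1/x| + 1/2⌋` (i.e. `|1/x|` minus the integer
nearest to `|1/x|`) on irrationals, extended by `0` at the remaining points. -/
noncomputable def nearestIntMap (x : ℝ) : ℝ :=
  open Classical in
  if Irrational x then |1 / x| - (⌊|1 / x| + 1 / 2⌋ : ℤ) else 0

/-!
With `sgn` the sign of `x` and `digit` the integer nearest to `|1/x|`, the map is
`x ↦ sgn / x - digit`, the conjugate moves by `y ↦ sgn / y - digit`, and the discriminant of the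
integer quadratic vanishing at `x` and `y` stays fixed. Reduced pairs map to reduced pairs, on which
the map is injective; as reduced pairs of a given discriminant have bounded coefficients, the orbit
of a reduced point is purely periodic. Conversely, on a periodic orbit without reduced points the
points end up negative with digits `≥ 3` and conjugates in `(-φ - 1, -1)`, where
`y ↦ -1 / y - digit` strictly decreases `y`.
-/

open Real Function
open scoped goldenRatio

lemma Irrational.eq_zero_of_intCast_mul_add_intCast_eq_zero {x : ℝ} (hx : Irrational x)
    {p q : ℤ} (h : p * x + q = 0) : p = 0 := by
  by_contra hp
  exact ((hx.intCast_mul hp).add_intCast q).ne_zero h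

lemma Int.abs_le_of_sq_le {a d : ℤ} (h : a ^ 2 ≤ d) : |a| ≤ d := by
  rw [← Int.natCast_natAbs]
  exact (Int.natAbs_le_self_sq a).trans h

namespace NearestInt

lemma three_halves_lt_goldenRatio : 3 / 2 < φ := by
  have : 2 < √5 := by rw [Real.lt_sqrt] <;> norm_num
  rw [goldenRatio]
  linarith

lemma goldenRatio_add_one_mul_two_sub : (φ + 1) * (2 - φ) = 1 := by
  linear_combination -goldenRatio_sq

def IsReduced (x y : ℝ) : Prop := (x < 0 ∧ y ≤ -φ - 1) ∨ (0 < x ∧ y ≤ -φ)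

lemma IsReduced.le_neg_goldenRatio {x y : ℝ} (h : IsReduced x y) : y ≤ -φ := by
  rcases h with ⟨-, h⟩ | ⟨-, h⟩ <;> linarith

/-- The coefficients are carried along the orbit because they keep a fixed discriminant, which
bounds them at reduced points. -/
structure ConjPair where
  x : ℝ
  y : ℝ
  a : ℤ
  b : ℤ
  c : ℤ
  a_ne_zero : a ≠ 0
  irrational_x : Irrational x
  abs_x_lt : |x| < 1 / 2
  b_eq : (b : ℝ) = -a * (x + y)
  c_eq : (c : ℝ) = a * x * y

namespace ConjPair

variable (s t : ConjPair)

lemma x_ne_zero : s.x ≠ 0 := s.irrational_x.ne_zero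

lemma cast_a_ne_zero : (s.a : ℝ) ≠ 0 := Int.cast_ne_zero.mpr s.a_ne_zero

lemma y_eq : s.y = -s.b / s.a - s.x := by
  rw [s.b_eq]; field_simp [s.cast_a_ne_zero]; ring

lemma irrational_y : Irrational s.y := by
  have := s.irrational_x.ratCast_sub (-s.b / s.a)
  rwa [Rat.cast_div, Rat.cast_neg, Rat.cast_intCast, Rat.cast_intCast, ← y_eq] at this

lemma y_ne_zero : s.y ≠ 0 := s.irrational_y.ne_zero

lemma x_ne_y : s.x ≠ s.y := by
  intro h
  have : 2 * s.a = 0 := s.irrational_x.eq_zero_of_intCast_mul_add_intCast_eq_zero (q := s.b) (by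
    rw [s.b_eq, ← h]; push_cast; ring)
  exact s.a_ne_zero (by omega)

lemma c_ne_zero : s.c ≠ 0 := by
  have : (s.c : ℝ) ≠ 0 := by
    rw [s.c_eq]; exact mul_ne_zero (mul_ne_zero s.cast_a_ne_zero s.x_ne_zero) s.y_ne_zero
  exact_mod_cast this

lemma y_eq_of_x_eq (h : s.x = t.x) : s.y = t.y := by
  have hab : t.a * s.b - s.a * t.b = 0 :=
    s.irrational_x.eq_zero_of_intCast_mul_add_intCast_eq_zero (q := t.a * s.c - s.a * t.c) (by
      push_cast; rw [s.b_eq, s.c_eq, t.b_eq, t.c_eq, ← h]; ring)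
  have hab : (t.a : ℝ) * s.b = s.a * t.b := by exact_mod_cast sub_eq_zero.mp hab
  rw [s.b_eq, t.b_eq, ← h] at hab
  have := mul_left_cancel₀ (mul_ne_zero s.cast_a_ne_zero t.cast_a_ne_zero)
    (show (s.a * t.a : ℝ) * (s.x + s.y) = s.a * t.a * (s.x + t.y) by linear_combination -hab)
  linarith

noncomputable def sgn : ℤ := if 0 < s.x then 1 else -1

noncomputable def digit : ℤ := round |1 / s.x|

lemma sgn_eq_one_or : s.sgn = 1 ∨ s.sgn = -1 := by
  unfold sgn; split_ifs <;> simp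

lemma sgn_of_pos (h : 0 < s.x) : s.sgn = 1 := if_pos h

lemma sgn_of_neg (h : s.x < 0) : s.sgn = -1 := if_neg h.not_gt

lemma sgn_sq : s.sgn ^ 2 = 1 := by
  rcases s.sgn_eq_one_or with h | h <;> simp [h]

lemma sgn_ne_zero : s.sgn ≠ 0 := by
  rcases s.sgn_eq_one_or with h | h <;> simp [h]

lemma cast_sgn_sq : (s.sgn : ℝ) ^ 2 = 1 := by exact_mod_cast s.sgn_sq

lemma abs_cast_sgn : |(s.sgn : ℝ)| = 1 := by
  rcases s.sgn_eq_one_or with h | h <;> simp [h]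

lemma abs_one_div_x : |1 / s.x| = s.sgn / s.x := by
  rcases s.x_ne_zero.lt_or_gt with h | h
  · rw [s.sgn_of_neg h, abs_of_neg (one_div_neg.mpr h)]; push_cast; ring
  · rw [s.sgn_of_pos h, abs_of_pos (one_div_pos.mpr h)]; push_cast; ring

lemma two_lt_abs_one_div_x : 2 < |1 / s.x| := by
  rw [abs_div, abs_one, lt_div_iff₀ (abs_pos.mpr s.x_ne_zero)]
  linarith [s.abs_x_lt]

lemma two_le_digit : 2 ≤ s.digit := by
  have h := abs_le.mp (abs_sub_round |1 / s.x|)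
  have : (1 : ℝ) < s.digit := by unfold digit; linarith [s.two_lt_abs_one_div_x]
  exact_mod_cast this

lemma irrational_sgn_div_x_sub_digit : Irrational (s.sgn / s.x - s.digit) :=
  (s.irrational_x.intCast_div s.sgn_ne_zero).sub_intCast _

lemma abs_sgn_div_x_sub_digit_lt : |s.sgn / s.x - s.digit| < 1 / 2 := by
  have hle : |s.sgn / s.x - s.digit| ≤ 1 / 2 := by rw [← s.abs_one_div_x]; exact abs_sub_round _
  refine hle.lt_of_ne fun h => ?_
  have hirr := s.irrational_sgn_div_x_sub_digit
  rcases (abs_eq (by norm_num : (0 : ℝ) ≤ 1 / 2)).mp h with h | h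
  · exact hirr.ne_rat (1 / 2) (by rw [h]; norm_num)
  · exact hirr.ne_rat (-1 / 2) (by rw [h]; norm_num)

/-- The coefficients come from substituting `x = sgn / (digit + x')` into `a x² + b x + c = 0`. -/
noncomputable def next : ConjPair where
  x := s.sgn / s.x - s.digit
  y := s.sgn / s.y - s.digit
  a := s.c
  b := 2 * s.c * s.digit + s.sgn * s.b
  c := s.c * s.digit ^ 2 + s.sgn * s.b * s.digit + s.a
  a_ne_zero := s.c_ne_zero
  irrational_x := s.irrational_sgn_div_x_sub_digit
  abs_x_lt := s.abs_sgn_div_x_sub_digit_lt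
  b_eq := by
    have := s.x_ne_zero; have := s.y_ne_zero
    push_cast; rw [s.b_eq, s.c_eq]; field_simp; ring
  c_eq := by
    have := s.x_ne_zero; have := s.y_ne_zero
    push_cast; rw [s.b_eq, s.c_eq]; field_simp; linear_combination -(s.a : ℝ) * s.cast_sgn_sq

lemma next_x : s.next.x = s.sgn / s.x - s.digit := rfl

lemma next_y : s.next.y = s.sgn / s.y - s.digit := rfl

lemma next_x_eq_nearestIntMap : s.next.x = nearestIntMap s.x := by
  rw [nearestIntMap, if_pos s.irrational_x, ← round_eq, next_x, ← s.abs_one_div_x]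
  rfl

lemma x_eq_sgn_div : s.x = s.sgn / (s.digit + s.next.x) := by
  rw [next_x, add_sub_cancel, div_div_eq_mul_div,
    mul_div_cancel_left₀ _ (Int.cast_ne_zero.mpr s.sgn_ne_zero)]

lemma discrim_next : discrim s.next.a s.next.b s.next.c = discrim s.a s.b s.c := by
  simp only [discrim, next]
  linear_combination s.b ^ 2 * s.sgn_sq

lemma discrim_eq : ((discrim s.a s.b s.c : ℤ) : ℝ) = s.a ^ 2 * (s.x - s.y) ^ 2 := by
  simp only [discrim]
  push_cast
  rw [s.b_eq, s.c_eq]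
  ring

lemma three_le_digit_of_next_x_neg (h : s.next.x < 0) : 3 ≤ s.digit := by
  by_contra! h3
  have h2 : s.digit = 2 := le_antisymm (Int.lt_add_one_iff.mp h3) s.two_le_digit
  rw [next_x, ← abs_one_div_x, h2] at h
  push_cast at h
  linarith [s.two_lt_abs_one_div_x]

lemma next_y_lt_neg_one (h : s.y < -1) : s.next.y < -1 := by
  have hsgn : (s.sgn : ℝ) / s.y < 1 := by
    rw [div_lt_iff_of_neg (by linarith)]
    rcases s.sgn_eq_one_or with h' | h' <;> simp [h'] <;> linarith
  have := s.two_le_digit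
  rw [next_y]
  have : (2 : ℝ) ≤ s.digit := by exact_mod_cast this
  linarith

lemma isReduced_next_of_sgn_div_y_le (h : (s.sgn : ℝ) / s.y ≤ 2 - φ) :
    IsReduced s.next.x s.next.y := by
  have hy : s.next.y ≤ 2 - φ - s.digit := by rw [next_y]; linarith
  have h2 : (2 : ℝ) ≤ s.digit := by exact_mod_cast s.two_le_digit
  rcases s.next.x_ne_zero.lt_or_gt with hx | hx
  · have h3 : (3 : ℝ) ≤ s.digit := by exact_mod_cast s.three_le_digit_of_next_x_neg hx
    exact Or.inl ⟨hx, by linarith⟩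
  · exact Or.inr ⟨hx, by linarith⟩

lemma isReduced_next_of_x_pos (hx : 0 < s.x) (hy : s.y < 0) : IsReduced s.next.x s.next.y :=
  s.isReduced_next_of_sgn_div_y_le <| by
    rw [s.sgn_of_pos hx, Int.cast_one]
    linarith [one_div_neg.mpr hy, goldenRatio_lt_two]

lemma y_ne_neg_goldenRatio : s.y ≠ -φ := by
  -- otherwise `x` would be the conjugate `φ - 1 > 1/2` of `-φ`
  intro hy
  have hba : s.b - s.a = 0 :=
    goldenRatio_irrational.eq_zero_of_intCast_mul_add_intCast_eq_zero (q := -(s.c + s.a)) (by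
      push_cast; rw [s.b_eq, s.c_eq, hy]; linear_combination (s.a : ℝ) * goldenRatio_sq)
  have hx : (s.a : ℝ) * (s.x - (φ - 1)) = 0 := by
    have hb := s.b_eq
    rw [show s.b = s.a by omega, hy] at hb
    linear_combination hb
  have hx := (mul_eq_zero.mp hx).resolve_left s.cast_a_ne_zero
  have := s.abs_x_lt
  rw [sub_eq_zero.mp hx, abs_of_pos (by linarith [one_lt_goldenRatio])] at this
  linarith [three_halves_lt_goldenRatio]

lemma sgn_div_y_mem_Ioc (h : IsReduced s.x s.y) :
    (s.sgn : ℝ) / s.y ∈ Set.Ioc (1 - φ) (2 - φ) := by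
  rcases h with ⟨hx, hy⟩ | ⟨hx, hy⟩
  · have hy0 : s.y < 0 := by linarith [goldenRatio_pos]
    rw [s.sgn_of_neg hx]
    push_cast
    constructor
    · linarith [div_pos_of_neg_of_neg neg_one_lt_zero hy0, one_lt_goldenRatio]
    · rw [div_le_iff_of_neg hy0]
      nlinarith [goldenRatio_add_one_mul_two_sub, goldenRatio_lt_two]
  · have hy : s.y < -φ := lt_of_le_of_ne hy s.y_ne_neg_goldenRatio
    have hy0 : s.y < 0 := by linarith [goldenRatio_pos]
    rw [s.sgn_of_pos hx]
    push_cast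
    constructor
    · rw [lt_div_iff_of_neg hy0]
      nlinarith [goldenRatio_sq, one_lt_goldenRatio]
    · linarith [one_div_neg.mpr hy0, goldenRatio_lt_two]

lemma isReduced_next (h : IsReduced s.x s.y) : IsReduced s.next.x s.next.y :=
  s.isReduced_next_of_sgn_div_y_le (s.sgn_div_y_mem_Ioc h).2

lemma x_eq_of_next_x_eq (hs : IsReduced s.x s.y) (ht : IsReduced t.x t.y)
    (h : s.next.x = t.next.x) : s.x = t.x := by
  -- `sgn / y = digit + next.y` lies in a half-open interval of length one, so `next.y`
  -- determines the digit, and then the sign of `sgn / y` determines `sgn`.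
  have hy := s.next.y_eq_of_x_eq t.next h
  rw [next_y, next_y] at hy
  have hs' := s.sgn_div_y_mem_Ioc hs
  have ht' := t.sgn_div_y_mem_Ioc ht
  have hdigit : s.digit = t.digit := by
    have hlt : |((s.digit - t.digit : ℤ) : ℝ)| < 1 := by
      rw [abs_lt]
      push_cast
      constructor <;> linarith [hs'.1, hs'.2, ht'.1, ht'.2]
    exact sub_eq_zero.mp (Int.abs_lt_one_iff.mp (by exact_mod_cast hlt))
  have hsgn : s.sgn = t.sgn := by
    rw [hdigit, sub_left_inj] at hy
    have hys := one_div_neg.mpr (hs.le_neg_goldenRatio.trans_lt (neg_lt_zero.mpr goldenRatio_pos))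
    have hyt := one_div_neg.mpr (ht.le_neg_goldenRatio.trans_lt (neg_lt_zero.mpr goldenRatio_pos))
    rcases s.sgn_eq_one_or with h1 | h1 <;> rcases t.sgn_eq_one_or with h2 | h2 <;>
      rw [h1, h2] at hy ⊢ <;> push_cast at hy <;> rw [neg_div] at * <;> linarith
  rw [s.x_eq_sgn_div, t.x_eq_sgn_div, hsgn, hdigit, h]

lemma one_lt_x_sub_y (h : IsReduced s.x s.y) : 1 < s.x - s.y := by
  linarith [h.le_neg_goldenRatio, (abs_lt.mp s.abs_x_lt).1, three_halves_lt_goldenRatio]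

lemma sq_a_le_discrim (h : IsReduced s.x s.y) : s.a ^ 2 ≤ discrim s.a s.b s.c := by
  have h1 := s.one_lt_x_sub_y h
  have : ((s.a ^ 2 : ℤ) : ℝ) ≤ discrim s.a s.b s.c := by
    have h2 : 1 ≤ (s.x - s.y) ^ 2 := by nlinarith
    rw [discrim_eq]
    push_cast
    nlinarith [mul_le_mul_of_nonneg_left h2 (sq_nonneg (s.a : ℝ))]
  exact_mod_cast this

lemma sq_b_le_four_mul_discrim (h : IsReduced s.x s.y) :
    s.b ^ 2 ≤ 4 * discrim s.a s.b s.c := by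
  have hy := h.le_neg_goldenRatio
  have hx := abs_lt.mp s.abs_x_lt
  have hφ := three_halves_lt_goldenRatio
  have hsum : (s.x + s.y) ^ 2 ≤ 4 * (s.x - s.y) ^ 2 := by
    nlinarith [mul_pos (by linarith : 0 < s.x - 3 * s.y) (by linarith : 0 < 3 * s.x - s.y)]
  have : ((s.b ^ 2 : ℤ) : ℝ) ≤ ((4 * discrim s.a s.b s.c : ℤ) : ℝ) := by
    push_cast
    rw [discrim_eq, s.b_eq]
    nlinarith [mul_le_mul_of_nonneg_left hsum (sq_nonneg (s.a : ℝ))]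
  exact_mod_cast this

lemma x_eq_of_coeffs_eq (hs : IsReduced s.x s.y) (ht : IsReduced t.x t.y) (ha : s.a = t.a)
    (hb : s.b = t.b) (hd : discrim s.a s.b s.c = discrim t.a t.b t.c) : s.x = t.x := by
  have hsum : s.x + s.y = t.x + t.y := by
    have h := s.b_eq
    rw [hb, t.b_eq, ha] at h
    exact (mul_left_cancel₀ (neg_ne_zero.mpr t.cast_a_ne_zero) h).symm
  have hdiff : s.x - s.y = t.x - t.y := by
    have h := congrArg (fun d : ℤ => (d : ℝ)) hd
    rw [s.discrim_eq, t.discrim_eq, ha] at h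
    have h := mul_left_cancel₀ (pow_ne_zero 2 t.cast_a_ne_zero) h
    have hs := s.one_lt_x_sub_y hs
    have ht := t.one_lt_x_sub_y ht
    exact (sq_eq_sq₀ (by linarith) (by linarith)).mp h
  linarith

lemma abs_sub_lt_abs_next_sub (h : -1 ≤ s.next.y) : |s.x - s.y| < |s.next.x - s.next.y| := by
  have hx := s.x_ne_zero
  have hy := s.y_ne_zero
  have hdiff : s.next.x - s.next.y = s.sgn * (s.y - s.x) / (s.x * s.y) := by
    rw [next_x, next_y]
    field_simp
    ring
  have hy1 : |s.y| ≤ 1 := by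
    have h1 : 1 ≤ (s.sgn : ℝ) / s.y := by
      rw [next_y] at h
      linarith [(by exact_mod_cast s.two_le_digit : (2 : ℝ) ≤ s.digit)]
    have h2 : 1 ≤ |(s.sgn : ℝ) / s.y| := h1.trans (le_abs_self _)
    rwa [abs_div, s.abs_cast_sgn, le_div_iff₀ (abs_pos.mpr hy), one_mul] at h2
  have hprod : |s.x * s.y| < 1 := by
    rw [abs_mul]
    nlinarith [abs_nonneg s.x, abs_nonneg s.y, s.abs_x_lt]
  have hpos : 0 < |s.y - s.x| := abs_pos.mpr (sub_ne_zero.mpr s.x_ne_y.symm)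
  rw [hdiff, abs_div, abs_mul, s.abs_cast_sgn, one_mul, abs_sub_comm,
    lt_div_iff₀ (abs_pos.mpr (mul_ne_zero hx hy))]
  nlinarith [mul_lt_mul_of_pos_left hprod hpos]

lemma next_y_lt_y (hx : s.x < 0) (hm : 3 ≤ s.digit) (hy : -φ - 1 < s.y) (hy' : s.y < -1) :
    s.next.y < s.y := by
  have hm : (3 : ℝ) ≤ s.digit := by exact_mod_cast hm
  have h : (-1 : ℝ) / s.y < s.y + 3 := by
    rw [div_lt_iff_of_neg (by linarith)]
    have h1 : 0 < s.y + φ + 1 := by linarith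
    have h2 : 0 < φ - 2 - s.y := by linarith [one_lt_goldenRatio]
    nlinarith [goldenRatio_add_one_mul_two_sub, mul_pos h1 h2]
  rw [next_y, s.sgn_of_neg hx]
  push_cast
  linarith

noncomputable def orbit (n : ℕ) : ConjPair := next^[n] s

@[simp]
lemma orbit_zero : s.orbit 0 = s := rfl

lemma orbit_succ (n : ℕ) : s.orbit (n + 1) = (s.orbit n).next :=
  iterate_succ_apply' _ _ _

lemma orbit_x (n : ℕ) : (s.orbit n).x = nearestIntMap^[n] s.x := by
  induction n with
  | zero => rfl
  | succ n ih => rw [orbit_succ, iterate_succ_apply', ← ih, next_x_eq_nearestIntMap]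

lemma discrim_orbit (n : ℕ) :
    discrim (s.orbit n).a (s.orbit n).b (s.orbit n).c = discrim s.a s.b s.c := by
  induction n with
  | zero => rfl
  | succ n ih => rw [orbit_succ, discrim_next, ih]

lemma orbit_add_of_invariant {P : ℝ → ℝ → Prop}
    (hP : ∀ t : ConjPair, P t.x t.y → P t.next.x t.next.y) {N : ℕ}
    (hN : P (s.orbit N).x (s.orbit N).y) (j : ℕ) :
    P (s.orbit (N + j)).x (s.orbit (N + j)).y := by
  induction j with
  | zero => exact hN
  | succ j ih => rw [← add_assoc, orbit_succ]; exact hP _ ih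

lemma isReduced_orbit (h : IsReduced s.x s.y) (n : ℕ) :
    IsReduced (s.orbit n).x (s.orbit n).y := by
  simpa using s.orbit_add_of_invariant (fun t => t.isReduced_next) (N := 0) h n

lemma x_eq_orbit_x_of_orbit_x_eq (h : IsReduced s.x s.y) {i k : ℕ}
    (hik : (s.orbit i).x = (s.orbit (i + k)).x) : s.x = (s.orbit k).x := by
  induction i with
  | zero => simpa using hik
  | succ i ih =>
    rw [show i + 1 + k = i + k + 1 by omega, orbit_succ, orbit_succ] at hik
    exact ih (x_eq_of_next_x_eq _ _ (s.isReduced_orbit h i) (s.isReduced_orbit h (i + k)) hik)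

theorem exists_isPeriodicPt_of_isReduced (h : IsReduced s.x s.y) :
    ∃ p, 0 < p ∧ IsPeriodicPt nearestIntMap p s.x := by
  set D := discrim s.a s.b s.c
  have hmem (n : ℕ) : ((s.orbit n).a, (s.orbit n).b) ∈
      Set.Icc (-D) D ×ˢ Set.Icc (-(4 * D)) (4 * D) := by
    have hr := s.isReduced_orbit h n
    have ha := (s.orbit n).sq_a_le_discrim hr
    have hb := (s.orbit n).sq_b_le_four_mul_discrim hr
    rw [discrim_orbit] at ha hb
    exact ⟨abs_le.mp (Int.abs_le_of_sq_le ha), abs_le.mp (Int.abs_le_of_sq_le hb)⟩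
  obtain ⟨i, j, hij, hf⟩ := Set.Finite.exists_lt_map_eq_of_forall_mem hmem
    ((Set.finite_Icc _ _).prod (Set.finite_Icc _ _))
  obtain ⟨k, rfl⟩ := Nat.exists_eq_add_of_lt hij
  have hx : (s.orbit i).x = (s.orbit (i + (k + 1))).x :=
    x_eq_of_coeffs_eq _ _ (s.isReduced_orbit h _) (s.isReduced_orbit h _) (Prod.ext_iff.mp hf).1
      (Prod.ext_iff.mp hf).2 (by rw [discrim_orbit, discrim_orbit])
  refine ⟨k + 1, k.succ_pos, ?_⟩
  rw [IsPeriodicPt, IsFixedPt, ← orbit_x]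
  exact (s.x_eq_orbit_x_of_orbit_x_eq h hx).symm

section Periodic

variable {p : ℕ}

lemma orbit_x_add_mul (hper : IsPeriodicPt nearestIntMap p s.x) (n k : ℕ) :
    (s.orbit (n + p * k)).x = (s.orbit n).x := by
  rw [orbit_x, orbit_x, iterate_add_apply, (hper.mul_const k).eq]

lemma orbit_y_add_mul (hper : IsPeriodicPt nearestIntMap p s.x) (n k : ℕ) :
    (s.orbit (n + p * k)).y = (s.orbit n).y :=
  (s.orbit _).y_eq_of_x_eq _ (s.orbit_x_add_mul hper n k)

lemma orbit_of_isPeriodicPt (hper : IsPeriodicPt nearestIntMap p s.x) {P : ℝ → ℝ → Prop}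
    (hP : ∀ t : ConjPair, P t.x t.y → P t.next.x t.next.y) (hp : 0 < p) {N : ℕ}
    (hN : P (s.orbit N).x (s.orbit N).y) (n : ℕ) : P (s.orbit n).x (s.orbit n).y := by
  have h := s.orbit_add_of_invariant hP hN (n + p * N - N)
  have hN : N ≤ p * N := Nat.le_mul_of_pos_left N hp
  rwa [show N + (n + p * N - N) = n + p * N by omega, s.orbit_x_add_mul hper,
    s.orbit_y_add_mul hper] at h

theorem isReduced_of_isPeriodicPt (hper : IsPeriodicPt nearestIntMap p s.x) (hp : 0 < p) :
    IsReduced s.x s.y := by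
  by_contra hs
  have hx_p : (s.orbit p).x = s.x := by simpa using s.orbit_x_add_mul hper 0 1
  have hy_p : (s.orbit p).y = s.y := by simpa using s.orbit_y_add_mul hper 0 1
  have hnot (n : ℕ) : ¬ IsReduced (s.orbit n).x (s.orbit n).y := fun hn =>
    hs (s.orbit_of_isPeriodicPt hper (fun t => t.isReduced_next) hp hn 0)
  -- otherwise `|x - y|` would strictly increase along the periodic orbit
  obtain ⟨N, hN⟩ : ∃ n, (s.orbit n).y < -1 := by
    by_contra! h
    have hmono : StrictMono fun n => |(s.orbit n).x - (s.orbit n).y| :=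
      strictMono_nat_of_lt_succ fun n => by
        simpa only [orbit_succ] using
          (s.orbit n).abs_sub_lt_abs_next_sub (by simpa only [orbit_succ] using h (n + 1))
    exact (hmono hp).ne' (by simp only [hx_p, hy_p]; rfl)
  have hy (n : ℕ) : (s.orbit n).y < -1 :=
    s.orbit_of_isPeriodicPt hper (P := fun _ y => y < -1) (fun t => t.next_y_lt_neg_one) hp hN n
  have hx (n : ℕ) : (s.orbit n).x < 0 :=
    (s.orbit n).x_ne_zero.lt_or_gt.resolve_right fun hpos => hnot (n + 1) <| by
      rw [orbit_succ]
      exact (s.orbit n).isReduced_next_of_x_pos hpos (by linarith [hy n])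
  have hanti : StrictAnti fun n => (s.orbit n).y := strictAnti_nat_of_succ_lt fun n => by
    have hm := (s.orbit n).three_le_digit_of_next_x_neg (by rw [← orbit_succ]; exact hx (n + 1))
    have hlow : -φ - 1 < (s.orbit n).y := by
      by_contra! hle
      exact hnot n (Or.inl ⟨hx n, hle⟩)
    rw [orbit_succ]
    exact (s.orbit n).next_y_lt_y (hx n) hm hlow (hy n)
  exact (hanti hp).ne hy_p

end Periodic

theorem exists_isPeriodicPt_iff_isReduced :
    (∃ p, 0 < p ∧ IsPeriodicPt nearestIntMap p s.x) ↔ IsReduced s.x s.y :=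
  ⟨fun ⟨_, hp, hper⟩ => s.isReduced_of_isPeriodicPt hper hp,
    s.exists_isPeriodicPt_of_isReduced⟩

end ConjPair
end NearestInt

/-- A quadratic irrational `ω ∈ (-1/2,1/2)` is purely periodic under the Nearest Integer
map iff its Galois conjugate `ω' = -b/a - ω` satisfies `ω' ≤ -τ-1` in case `ω < 0`, or
`ω' ≤ -τ` in case `ω > 0`. -/
theorem nearestInt_purely_periodic_iff
    (ω : ℝ) (hmem : ω ∈ Set.Ioo (-(1:ℝ)/2) (1/2)) (hirr : Irrational ω)
    (a b c : ℤ) (ha : a ≠ 0)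
    (hroot : (a : ℝ) * ω ^ 2 + (b : ℝ) * ω + (c : ℝ) = 0) :
    (∃ p : ℕ, 1 ≤ p ∧ nearestIntMap^[p] ω = ω) ↔
      ((ω < 0 ∧ -(b : ℝ) / (a : ℝ) - ω ≤ -goldenRatio' - 1) ∨
       (0 < ω ∧ -(b : ℝ) / (a : ℝ) - ω ≤ -goldenRatio')) := by
  have haR : (a : ℝ) ≠ 0 := Int.cast_ne_zero.mpr ha
  let s : NearestInt.ConjPair :=
    { x := ω, y := -b / a - ω, a := a, b := b, c := c
      a_ne_zero := ha
      irrational_x := hirr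
      abs_x_lt := abs_lt.mpr ⟨by linarith [hmem.1], hmem.2⟩
      b_eq := by field_simp; ring
      c_eq := by field_simp; linear_combination hroot }
  exact s.exists_isPeriodicPt_iff_isReduced
end
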